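/- arXiv:0903.0303 — 5 statements merged into one kernel-verified Lean document; each statement's English description precedes it below -/
import Mathlib

section
/- Let N be a positive integer and let π be a non-crossing partition of {1,...,N} (with the cyclic order) having α blocks. Then the number of indices k ∈ {1,...,N} such that k and k+1 (taken cyclically, so N+1 is identified with 1) belong to the same block of π is at least N − 2(α − 1). -/
open Classical

/-- `i` and `j` lie in the same block of the partition `P`. -/
def SameBlock {N : ℕ} (P : Finpartition (Finset.univ : Finset (Fin N))) (i j : Fin N) : Prop :=
  ∃ b ∈ P.parts, i ∈ b ∧ j ∈ b

/-- A partition of `[N]` is non-crossing if for `i < j < k < l`, `i ∼ k` and `j ∼ l`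
imply `i ∼ j` (this is equivalent for the linear and the cyclic order). -/
def IsNonCrossing {N : ℕ} (P : Finpartition (Finset.univ : Finset (Fin N))) : Prop :=
  ∀ i j k l : Fin N, i < j → j < k → k < l →
    SameBlock P i k → SameBlock P j l → SameBlock P i j

/-!
Call `k` a break when `k` and `k + 1` lie in different blocks. If `k + 1` is the least element
of its block, the break opens that block. Otherwise some `j < k` lies in the block of `k + 1`,
and non-crossing confines the block of `k` to the interval `(j, k]`: the break closes that block,
which contains neither `0` nor `N - 1`. A block is opened at most once and closed at most once,
and the block of `0` is opened only by a break at `N - 1`, which exists only if `0` and `N - 1`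
lie in different blocks. Hence at most `2α - 2` of the `N` indices are breaks.
-/

open Finset

section Blocks

variable {α : Type*} [LinearOrder α] [Fintype α] [DecidableEq α]
  (P : Finpartition (univ : Finset α))

def IsBlockMin (i : α) : Prop := ∀ j ∈ P.part i, i ≤ j

def IsBlockMax (i : α) : Prop := ∀ j ∈ P.part i, j ≤ i

lemma injOn_part_isBlockMin : Set.InjOn P.part {i | IsBlockMin P i} := by
  intro i hi i' hi' h
  have hi'i : i' ∈ P.part i := h ▸ P.mem_part (mem_univ i')
  have hii' : i ∈ P.part i' := h ▸ P.mem_part (mem_univ i)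
  exact le_antisymm (hi i' hi'i) (hi' i hii')

lemma injOn_part_isBlockMax : Set.InjOn P.part {i | IsBlockMax P i} := by
  intro i hi i' hi' h
  have hi'i : i' ∈ P.part i := h ▸ P.mem_part (mem_univ i')
  have hii' : i ∈ P.part i' := h ▸ P.mem_part (mem_univ i)
  exact le_antisymm (hi' i hii') (hi i' hi'i)

end Blocks

lemma card_add_card_add_two_le {β : Type*} [DecidableEq β] {s t u : Finset β} {a b : β}
    (ha : a ∈ s) (hb : b ∈ s) (ht : t ⊆ s) (hu : u ⊆ s)
    (hat : a = b → a ∉ t) (hau : a ∉ u) (hbu : b ∉ u) : #t + #u + 2 ≤ 2 * #s := by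
  rcases eq_or_ne a b with rfl | hab
  · have ht' := card_le_card (subset_erase.2 ⟨ht, hat rfl⟩)
    have hu' := card_le_card (subset_erase.2 ⟨hu, hau⟩)
    have hs := card_erase_add_one ha
    omega
  · have ht' := card_le_card ht
    have hu' := card_le_card (subset_erase.2 ⟨subset_erase.2 ⟨hu, hau⟩, hbu⟩)
    have hs := card_erase_add_one ha
    have hs' := card_erase_add_one (mem_erase.2 ⟨hab.symm, hb⟩)
    omega

section NonCrossing

variable {N : ℕ} {P : Finpartition (univ : Finset (Fin N))}

lemma sameBlock_iff_part_eq {i j : Fin N} : SameBlock P i j ↔ P.part i = P.part j :=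
  P.mem_part_iff_exists.symm.trans (P.mem_part_iff_part_eq_part (mem_univ i) (mem_univ j))

lemma IsNonCrossing.part_eq (hP : IsNonCrossing P) {i j k l : Fin N} (hij : i < j) (hjk : j < k)
    (hkl : k < l) (hik : P.part i = P.part k) (hjl : P.part j = P.part l) :
    P.part i = P.part j :=
  sameBlock_iff_part_eq.1 <|
    hP i j k l hij hjk hkl (sameBlock_iff_part_eq.2 hik) (sameBlock_iff_part_eq.2 hjl)

lemma IsNonCrossing.lt_and_lt_of_mem_part (hP : IsNonCrossing P) {i j k m : Fin N} (hjk : j < k)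
    (hkm : k < m) (hjm : P.part j = P.part m) (hk : P.part k ≠ P.part m) (hi : i ∈ P.part k) :
    j < i ∧ i < m := by
  have hik : P.part i = P.part k := P.part_eq_of_mem (P.part_mem.2 (mem_univ k)) hi
  refine ⟨lt_of_not_ge fun hij => ?_, lt_of_not_ge fun hmi => ?_⟩
  · rcases hij.lt_or_eq with hij | rfl
    · exact hk (hik ▸ (hP.part_eq hij hjk hkm hik hjm).trans hjm)
    · exact hk (hik ▸ hjm)
  · rcases hmi.lt_or_eq with hmi | rfl
    · exact hk ((hP.part_eq hjk hkm hmi hjm hik.symm).symm.trans hjm)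
    · exact hk hik.symm

end NonCrossing

lemma Fin.covBy_add_one_of_lt_last {n : ℕ} {k : Fin (n + 1)} (hk : k < Fin.last n) :
    k ⋖ k + 1 :=
  Fin.covBy_iff.2 (by rw [Fin.val_add_one_of_lt hk]; exact Order.covBy_add_one _)

section Cyclic

variable {n : ℕ} {P : Finpartition (univ : Finset (Fin (n + 1)))} {k : Fin (n + 1)}

lemma lt_last_of_not_isBlockMin_add_one (hmin : ¬ IsBlockMin P (k + 1)) : k < Fin.last n := by
  refine (Fin.le_last k).lt_of_ne ?_
  rintro rfl
  exact hmin fun j _ => by simp [Fin.last_add_one]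

lemma IsNonCrossing.part_subset_Ioc_of_not_isBlockMin_add_one (hP : IsNonCrossing P)
    (hk : P.part k ≠ P.part (k + 1)) (hmin : ¬ IsBlockMin P (k + 1)) :
    P.part k ⊆ Ioc 0 k := by
  obtain ⟨j, hj, hjk⟩ : ∃ j ∈ P.part (k + 1), j < k + 1 := by simpa [IsBlockMin] using hmin
  have hcov := Fin.covBy_add_one_of_lt_last (lt_last_of_not_isBlockMin_add_one hmin)
  have hjm : P.part j = P.part (k + 1) := P.part_eq_of_mem (P.part_mem.2 (mem_univ _)) hj
  have hjk : j < k := (hcov.le_of_lt hjk).lt_of_ne fun h => hk (h ▸ hjm)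
  intro i hi
  obtain ⟨hji, him⟩ := hP.lt_and_lt_of_mem_part hjk hcov.lt hjm hk hi
  exact mem_Ioc.2 ⟨(Fin.zero_le j).trans_lt hji, hcov.le_of_lt him⟩

lemma eq_last_of_isBlockMin_add_one_of_part_eq_part_zero
    (hmin : IsBlockMin P (k + 1)) (h0 : P.part (k + 1) = P.part 0) : k = Fin.last n := by
  have hk : k + 1 = 0 := nonpos_iff_eq_zero.1 (hmin 0 (h0 ▸ P.mem_part (mem_univ 0)))
  exact add_right_cancel (hk.trans (Fin.last_add_one n).symm)

theorem IsNonCrossing.card_filter_part_ne_part_add_one_add_two_le (hP : IsNonCrossing P) :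
    #{k | P.part k ≠ P.part (k + 1)} + 2 ≤ 2 * #P.parts := by
  set W : Finset (Fin (n + 1)) := {k | P.part k ≠ P.part (k + 1)}
  have hW {k} (hk : k ∈ W) : P.part k ≠ P.part (k + 1) := (mem_filter.1 hk).2
  set O := W.filter fun k => IsBlockMin P (k + 1)
  set C := W.filter fun k => ¬ IsBlockMin P (k + 1)
  have hC {k} (hk : k ∈ C) : k < Fin.last n ∧ P.part k ⊆ Ioc 0 k :=
    ⟨lt_last_of_not_isBlockMin_add_one (mem_filter.1 hk).2,
      hP.part_subset_Ioc_of_not_isBlockMin_add_one (hW (mem_filter.1 hk).1) (mem_filter.1 hk).2⟩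
  have hO_card : #(O.image fun k => P.part (k + 1)) = #O :=
    card_image_of_injOn fun k hk k' hk' h =>
      add_right_cancel (injOn_part_isBlockMin P (mem_filter.1 hk).2 (mem_filter.1 hk').2 h)
  have hC_card : #(C.image P.part) = #C :=
    card_image_of_injOn fun k hk k' hk' =>
      injOn_part_isBlockMax P (fun i hi => (mem_Ioc.1 ((hC hk).2 hi)).2)
        (fun i hi => (mem_Ioc.1 ((hC hk').2 hi)).2)
  rw [← card_filter_add_card_filter_not (s := W) (fun k => IsBlockMin P (k + 1)), ← hO_card,
    ← hC_card]
  refine card_add_card_add_two_le (a := P.part 0) (b := P.part (Fin.last n))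
    (P.part_mem.2 (mem_univ _)) (P.part_mem.2 (mem_univ _)) ?_ ?_ ?_ ?_ ?_
  · exact image_subset_iff.2 fun k _ => P.part_mem.2 (mem_univ _)
  · exact image_subset_iff.2 fun k _ => P.part_mem.2 (mem_univ _)
  · intro h0l hmem
    obtain ⟨k, hk, hk0⟩ := mem_image.1 hmem
    obtain rfl := eq_last_of_isBlockMin_add_one_of_part_eq_part_zero (mem_filter.1 hk).2 hk0
    exact hW (mem_filter.1 hk).1 (h0l.symm.trans hk0.symm)
  · intro hmem
    obtain ⟨k, hk, hk0⟩ := mem_image.1 hmem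
    exact (mem_Ioc.1 ((hC hk).2 (hk0 ▸ P.mem_part (mem_univ 0)))).1.false
  · intro hmem
    obtain ⟨k, hk, hkl⟩ := mem_image.1 hmem
    exact ((hC hk).1.trans_le (mem_Ioc.1 ((hC hk).2 (hkl ▸ P.mem_part (mem_univ _)))).2).false

end Cyclic

/-- If `π` is a non-crossing partition of `[N]` with `α` blocks, then the number of
`k ∈ [N]` with `k ∼_π k+1` (cyclically) is at least `N − 2(α − 1)`. -/
theorem card_cyclic_consecutive_ge (N : ℕ) [NeZero N]
    (P : Finpartition (Finset.univ : Finset (Fin N))) (hP : IsNonCrossing P) :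
    N - 2 * (P.parts.card - 1) ≤
      (Finset.univ.filter (fun k : Fin N => SameBlock P k (k + 1))).card := by
  obtain ⟨n, rfl⟩ := Nat.exists_eq_add_one_of_ne_zero (NeZero.ne N)
  have hsplit :=
    card_filter_add_card_filter_not (s := univ) fun k : Fin (n + 1) => SameBlock P k (k + 1)
  have hbreaks : #{k : Fin (n + 1) | ¬ SameBlock P k (k + 1)} + 2 ≤ 2 * #P.parts := by
    simpa only [sameBlock_iff_part_eq] using hP.card_filter_part_ne_part_add_one_add_two_le
  rw [card_univ, Fintype.card_fin] at hsplit
  omega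
end

section
/- Let X₁, ..., X_N be complex matrices of the same shape (say α × β) and let m ≥ 1 be an integer. Then ∑_{i=1}^N Tr((Xᵢ* Xᵢ)^m) ≤ Tr((∑_{i=1}^N Xᵢ* Xᵢ)^m). -/
/-!
For positive semidefinite `A, B` we have `Tr (A + B)^(k+1) = Tr A (A + B)^k + Tr B (A + B)^k`,
so superadditivity of `X ↦ Tr X^(k+1)` on positive semidefinite matrices reduces to
`Tr A^(k+1) ≤ Re Tr A (A + B)^k`. In an eigenbasis of `A = diag a` the right side is
`∑ aᵢ (D^k)ᵢᵢ` with `D = A + B`; here `aᵢ ≤ Dᵢᵢ`, and `Dᵢᵢ^k ≤ (D^k)ᵢᵢ` is Jensen's inequality for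
`t ↦ t^k`, the weights being the squared moduli of a row of a unitary diagonalising `D`.
Induction over the summands `Xᵢᴴ Xᵢ` gives the theorem.
-/

open Matrix
open scoped ComplexOrder

namespace Matrix

variable {𝕜 n : Type*} [RCLike 𝕜] [Fintype n]

lemma PosSemidef.im_trace {X : Matrix n n 𝕜} (hX : X.PosSemidef) : RCLike.im (trace X) = 0 :=
  (RCLike.nonneg_iff.mp hX.trace_nonneg).2

variable [DecidableEq n]

lemma mul_diagonal_mul_conjTranspose_apply_self (U : Matrix n n 𝕜) (d : n → ℝ) (i : n) :
    (U * diagonal (fun j ↦ (d j : 𝕜)) * Uᴴ) i i = ((∑ j, ‖U i j‖ ^ 2 * d j : ℝ) : 𝕜) := by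
  rw [mul_apply]
  push_cast
  refine Finset.sum_congr rfl fun j _ ↦ ?_
  rw [mul_diagonal, conjTranspose_apply, mul_right_comm, RCLike.star_def, RCLike.mul_conj]

lemma sum_norm_sq_apply_of_mem_unitaryGroup {U : Matrix n n 𝕜} (hU : U ∈ unitaryGroup n 𝕜)
    (i : n) : ∑ j, ‖U i j‖ ^ 2 = 1 := by
  have h := mul_diagonal_mul_conjTranspose_apply_self U 1 i
  simp only [Pi.one_apply, RCLike.ofReal_one, diagonal_one, mul_one, ← star_eq_conjTranspose,
    Unitary.mul_star_self_of_mem hU, one_apply_eq] at h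
  exact_mod_cast h.symm

lemma IsHermitian.spectral_theorem_pow {A : Matrix n n 𝕜} (hA : A.IsHermitian) (k : ℕ) :
    A ^ k = (hA.eigenvectorUnitary : Matrix n n 𝕜) *
      diagonal (fun j ↦ ((hA.eigenvalues j ^ k : ℝ) : 𝕜)) *
      (hA.eigenvectorUnitary : Matrix n n 𝕜)ᴴ := by
  conv_lhs => rw [hA.spectral_theorem]
  rw [← map_pow, diagonal_pow, Unitary.conjStarAlgAut_apply, star_eq_conjTranspose]
  simp [Function.comp_def, Pi.pow_def]

lemma PosSemidef.re_apply_self_pow_le {D : Matrix n n 𝕜} (hD : D.PosSemidef) (k : ℕ) (i : n) :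
    RCLike.re (D i i) ^ k ≤ RCLike.re ((D ^ k) i i) := by
  set U := (hD.1.eigenvectorUnitary : Matrix n n 𝕜)
  set d := hD.1.eigenvalues
  have hre (k : ℕ) : RCLike.re ((D ^ k) i i) = ∑ j, ‖U i j‖ ^ 2 * d j ^ k := by
    rw [hD.1.spectral_theorem_pow, mul_diagonal_mul_conjTranspose_apply_self, RCLike.ofReal_re]
  calc RCLike.re (D i i) ^ k
      = (∑ j, ‖U i j‖ ^ 2 * d j) ^ k := by simpa only [pow_one] using congrArg (· ^ k) (hre 1)
    _ ≤ ∑ j, ‖U i j‖ ^ 2 * d j ^ k := by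
      simpa using (convexOn_pow k).map_sum_le (t := Finset.univ) (fun j _ ↦ sq_nonneg ‖U i j‖)
        (sum_norm_sq_apply_of_mem_unitaryGroup hD.1.eigenvectorUnitary.2 i)
        (fun j _ ↦ hD.eigenvalues_nonneg j)
    _ = RCLike.re ((D ^ k) i i) := (hre k).symm

lemma trace_conjStarAlgAut (u : unitary (Matrix n n 𝕜)) (X : Matrix n n 𝕜) :
    trace (Unitary.conjStarAlgAut 𝕜 _ u X) = trace X := by
  rw [Unitary.conjStarAlgAut_apply, trace_mul_cycle, Unitary.coe_star_mul_self, one_mul]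

lemma PosSemidef.conjStarAlgAut {X : Matrix n n 𝕜} (hX : X.PosSemidef)
    (u : unitary (Matrix n n 𝕜)) :
    (Unitary.conjStarAlgAut 𝕜 _ u X).PosSemidef := by
  rw [Unitary.conjStarAlgAut_apply, star_eq_conjTranspose]
  exact hX.mul_mul_conjTranspose_same _

lemma re_trace_diagonal_pow_succ_le {D : Matrix n n 𝕜} (hD : D.PosSemidef) {a : n → ℝ}
    (ha : 0 ≤ a) (haD : ∀ i, a i ≤ RCLike.re (D i i)) (k : ℕ) :
    RCLike.re (trace (diagonal (fun i ↦ (a i : 𝕜)) ^ (k + 1)))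
      ≤ RCLike.re (trace (diagonal (fun i ↦ (a i : 𝕜)) * D ^ k)) := by
  rw [diagonal_pow, trace_diagonal, trace]
  simp only [diag_apply, diagonal_mul, map_sum, Pi.pow_apply, ← RCLike.ofReal_pow,
    RCLike.ofReal_re, RCLike.re_ofReal_mul]
  gcongr with i
  calc a i ^ (k + 1) = a i * a i ^ k := pow_succ' _ _
    _ ≤ a i * RCLike.re (D i i) ^ k :=
      mul_le_mul_of_nonneg_left (pow_le_pow_left₀ (ha i) (haD i) k) (ha i)
    _ ≤ a i * RCLike.re ((D ^ k) i i) :=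
      mul_le_mul_of_nonneg_left (hD.re_apply_self_pow_le k i) (ha i)

lemma PosSemidef.re_trace_pow_succ_le_re_trace_mul_add_pow {A B : Matrix n n 𝕜}
    (hA : A.PosSemidef) (hB : B.PosSemidef) (k : ℕ) :
    RCLike.re (trace (A ^ (k + 1))) ≤ RCLike.re (trace (A * (A + B) ^ k)) := by
  set u := star hA.1.eigenvectorUnitary
  have hA_diag : Unitary.conjStarAlgAut 𝕜 _ u A = diagonal (fun i ↦ (hA.1.eigenvalues i : 𝕜)) :=
    hA.1.conjStarAlgAut_star_eigenvectorUnitary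
  rw [← trace_conjStarAlgAut u (A ^ (k + 1)), ← trace_conjStarAlgAut u (A * _), map_pow,
    map_mul, map_pow, hA_diag]
  refine re_trace_diagonal_pow_succ_le ((hA.add hB).conjStarAlgAut _) hA.eigenvalues_nonneg
    (fun i ↦ ?_) k
  rw [map_add, add_apply, hA_diag, diagonal_apply_eq, map_add, RCLike.ofReal_re]
  exact le_add_of_nonneg_right (RCLike.nonneg_iff.mp ((hB.conjStarAlgAut _).diag_nonneg)).1

lemma PosSemidef.trace_pow_add_trace_pow_le {A B : Matrix n n 𝕜} (hA : A.PosSemidef)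
    (hB : B.PosSemidef) {m : ℕ} (hm : m ≠ 0) :
    trace (A ^ m) + trace (B ^ m) ≤ trace ((A + B) ^ m) := by
  obtain ⟨k, rfl⟩ := Nat.exists_eq_add_one_of_ne_zero hm
  rw [RCLike.le_iff_re_im, map_add, map_add, (hA.pow _).im_trace, (hB.pow _).im_trace,
    ((hA.add hB).pow _).im_trace, pow_succ' (A + B), add_mul, trace_add, map_add, add_zero]
  refine ⟨add_le_add (hA.re_trace_pow_succ_le_re_trace_mul_add_pow hB k) ?_, rfl⟩
  rw [add_comm A B]
  exact hB.re_trace_pow_succ_le_re_trace_mul_add_pow hA k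

lemma PosSemidef.sum_trace_pow_le {ι : Type*} (s : Finset ι) {X : ι → Matrix n n 𝕜}
    (hX : ∀ i ∈ s, (X i).PosSemidef) {m : ℕ} (hm : m ≠ 0) :
    ∑ i ∈ s, trace (X i ^ m) ≤ trace ((∑ i ∈ s, X i) ^ m) := by
  induction s using Finset.cons_induction with
  | empty => simp [zero_pow hm]
  | cons j s _ ih =>
    rw [Finset.forall_mem_cons] at hX
    rw [Finset.sum_cons, Finset.sum_cons]
    calc trace (X j ^ m) + ∑ i ∈ s, trace (X i ^ m)
        ≤ trace (X j ^ m) + trace ((∑ i ∈ s, X i) ^ m) := add_le_add le_rfl (ih hX.2)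
      _ ≤ trace ((X j + ∑ i ∈ s, X i) ^ m) :=
        hX.1.trace_pow_add_trace_pow_le (posSemidef_sum s hX.2) hm

end Matrix

/-- For complex matrices `X₁,...,X_N` of the same shape and `m ≥ 1`,
`∑ᵢ Tr((Xᵢ* Xᵢ)^m) ≤ Tr((∑ᵢ Xᵢ* Xᵢ)^m)` (inequality in `ℂ`, using the partial
order on `ℂ`; both sides are in fact nonnegative reals). -/
theorem sum_trace_pow_le (N α β m : ℕ) (hm : 1 ≤ m)
    (X : Fin N → Matrix (Fin α) (Fin β) ℂ) :
    ∑ i, Matrix.trace (((X i)ᴴ * X i) ^ m) ≤ Matrix.trace ((∑ i, (X i)ᴴ * X i) ^ m) :=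
  PosSemidef.sum_trace_pow_le _ (fun i _ ↦ posSemidef_conjTranspose_mul_self (X i))
    (Nat.one_le_iff_ne_zero.mp hm)
end

section
/- Let p be a prime, d ≥ 2 an integer, and define a_{k₁,...,k_d} = exp(2πi k₁⋯k_d / p) for k₁,...,k_d ∈ {1,...,p}. For 1 ≤ l ≤ d−1 let M_l be the p^l × p^{d−l} matrix whose ((k₁,...,k_l),(k_{l+1},...,k_d)) entry is a_{k₁,...,k_d}. Then the operator norm of M_l satisfies ‖M_l‖² ≤ (d−1) · p^{d−1}. -/
open Matrix Complex

/-- The operator norm (largest singular value) of a rectangular complex matrix. -/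
noncomputable def opNorm {α β : Type*} [Fintype α] [Fintype β] [DecidableEq α] [DecidableEq β]
    (A : Matrix α β ℂ) : ℝ :=
  ‖(Matrix.toEuclideanLin A).toContinuousLinearMap‖

/-- The matrix `M_l` built from `a_{k₁,...,k_d} = exp(2πi k₁⋯k_d / p)`: rows indexed
by `{1,...,p}^l` (encoded as `Fin l → Fin p`, `s i` representing `(s i)+1`), columns by
`{1,...,p}^{d-l}`. -/
noncomputable def Mmat (p d l : ℕ) : Matrix (Fin l → Fin p) (Fin (d - l) → Fin p) ℂ :=
  Matrix.of fun s t =>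
    Complex.exp (2 * Real.pi * Complex.I *
      ((∏ i, ((s i : ℕ) + 1 : ℕ)) * (∏ j, ((t j : ℕ) + 1 : ℕ)) : ℕ) / p)

/-!
Write `P s = ∏ᵢ (sᵢ + 1) mod p` and `ψ` for the standard additive character of `ZMod p`, so that
`M_l s t = ψ (P s * P t)`. By the Schur test, `‖M‖²`, the spectral radius of the Gram matrix
`Mᴴ M`, is at most the largest absolute row sum of `Mᴴ M`. Its entry at `(t, t')` is the character
sum `∑ₛ ψ ((P t' - P t) * P s)`: it equals `p^l` when `P t' = P t`, and otherwise summing out one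
coordinate of `s` leaves `p` times the number of `(l-1)`-tuples whose product vanishes mod `p`,
which is at most `(l-1) p^(l-1)`. A fiber of `P` on `r`-tuples has at most `r p^(r-1)` elements,
so every row sum is at most `r p^(r-1) · p^l + p^r · (l-1) p^(l-1) = (l+r-1) p^(l+r-1)`.
-/

open scoped NNReal

section Schur

variable {m n : Type*} [Fintype m] [Fintype n] [DecidableEq n]

section
attribute [local instance] Matrix.linftyOpNormedRing Matrix.linftyOpNormedAlgebra

lemma spectralRadius_le_of_sum_nnnorm_le [Nonempty n] (B : Matrix n n ℂ) {K : ℝ≥0}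
    (h : ∀ i, ∑ j, ‖B i j‖₊ ≤ K) : spectralRadius ℂ B ≤ K :=
  (spectrum.spectralRadius_le_nnnorm B).trans <| by
    rw [linfty_opNNNorm_def]; exact_mod_cast Finset.sup_le fun i _ => h i

end

section
open scoped Matrix.Norms.L2Operator

lemma spectralRadius_conjTranspose_mul_self (A : Matrix m n ℂ) :
    spectralRadius ℂ (Aᴴ * A) = ‖A‖₊ ^ 2 := by
  rw [(isHermitian_conjTranspose_mul_self A).isSelfAdjoint.spectralRadius_eq_nnnorm,
    l2_opNNNorm_conjTranspose_mul_self, sq, ENNReal.coe_mul]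

theorem opNorm_sq_le_of_sum_norm_conjTranspose_mul_self_le [DecidableEq m] (A : Matrix m n ℂ)
    {K : ℝ} (hK : 0 ≤ K) (h : ∀ j, ∑ j', ‖(Aᴴ * A) j j'‖ ≤ K) : opNorm A ^ 2 ≤ K := by
  cases isEmpty_or_nonempty n
  · simp [opNorm, Subsingleton.elim A 0, hK]
  lift K to ℝ≥0 using hK
  have h' : ∀ j, ∑ j', ‖(Aᴴ * A) j j'‖₊ ≤ K := fun j => by
    rw [← NNReal.coe_le_coe]; push_cast; exact h j
  have := (spectralRadius_conjTranspose_mul_self A).symm.trans_le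
    (spectralRadius_le_of_sum_nnnorm_le _ h')
  change ‖A‖ ^ 2 ≤ (K : ℝ)
  exact_mod_cast this

end

end Schur

open Finset Fintype

lemma card_filter_exists_apply_eq_mul_le {ι α : Type*} [Fintype ι] [DecidableEq ι] [Fintype α]
    [DecidableEq α] (a : α) :
    #{x : ι → α | ∃ i, x i = a} * card α ≤ card ι * card α ^ card ι := by
  have hfiber (i : ι) : #{x : ι → α | x i = a} * card α = card α ^ card ι := by
    have : Nonempty ι := ⟨i⟩
    simpa [pow_sub_one_mul card_ne_zero] using
      congrArg (· * card α) (card_filter_piFinset_const_eq_of_mem univ i (mem_univ a))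
  calc #{x : ι → α | ∃ i, x i = a} * card α
      ≤ (∑ i, #{x : ι → α | x i = a}) * card α := by
        gcongr
        exact (card_le_card fun x hx => by simpa using hx).trans card_biUnion_le
    _ = card ι * card α ^ card ι := by simp [sum_mul, hfiber]

variable {F : Type*} [Field F] [Fintype F] [DecidableEq F]

lemma card_filter_prod_eq_zero_mul_le {ι : Type*} [Fintype ι] [DecidableEq ι] :
    #{x : ι → F | ∏ i, x i = 0} * card F ≤ card ι * card F ^ card ι := by
  simpa only [prod_eq_zero_iff, mem_univ, true_and] using
    card_filter_exists_apply_eq_mul_le (ι := ι) (0 : F)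

lemma card_filter_prod_eq_le (k : ℕ) (a : F) :
    #{x : Fin (k + 1) → F | ∏ i, x i = a} ≤ (k + 1) * card F ^ k := by
  rcases eq_or_ne a 0 with rfl | ha
  · have h := card_filter_prod_eq_zero_mul_le (F := F) (ι := Fin (k + 1))
    rw [Fintype.card_fin, pow_succ, ← mul_assoc] at h
    exact Nat.le_of_mul_le_mul_right h card_pos
  · -- the first coordinate is determined by the others
    calc #{x : Fin (k + 1) → F | ∏ i, x i = a} ≤ #(univ : Finset (Fin k → F)) := by
          refine card_le_card_of_injOn Fin.tail (fun _ _ => mem_coe.2 (mem_univ _))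
            fun x hx y hy hxy => ?_
          simp only [coe_filter, mem_univ, true_and, Set.mem_ofPred_eq, Fin.prod_univ_succ] at hx hy
          have htail : ∏ i : Fin k, x i.succ = ∏ i : Fin k, y i.succ := congrArg (∏ i, · i) hxy
          have hne : ∏ i : Fin k, x i.succ ≠ 0 := fun h0 => ha (by rw [← hx, h0, mul_zero])
          have h0 : x 0 = y 0 := mul_right_cancel₀ hne (by rw [hx, htail, hy])
          exact funext fun i => Fin.cases h0 (congrFun hxy) i
      _ ≤ (k + 1) * card F ^ k := by simpa using Nat.le_mul_of_pos_left _ k.succ_pos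

lemma norm_sum_addChar_mul_prod_le {ψ : AddChar F ℂ} (hψ : ψ.IsPrimitive) {c : F} (hc : c ≠ 0)
    (k : ℕ) : ‖∑ x : Fin (k + 1) → F, ψ (c * ∏ i, x i)‖ ≤ k * card F ^ k := by
  have hsum : ∑ x : Fin (k + 1) → F, ψ (c * ∏ i, x i)
      = ∑ u : Fin k → F, if ∏ i, u i = 0 then (card F : ℂ) else 0 := by
    rw [← (Fin.consEquiv fun _ => F).sum_comp, Fintype.sum_prod_type, Finset.sum_comm]
    refine sum_congr rfl fun u _ => ?_
    simp_rw [Fin.consEquiv_apply, Fin.prod_cons, mul_left_comm c, AddChar.sum_mulShift _ hψ,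
      mul_eq_zero, hc, false_or, Nat.cast_ite, Nat.cast_zero]
  have hcount := card_filter_prod_eq_zero_mul_le (F := F) (ι := Fin k)
  rw [Fintype.card_fin] at hcount
  rw [hsum, sum_ite, sum_const_zero, add_zero, sum_const, nsmul_eq_mul, norm_mul,
    Complex.norm_natCast, Complex.norm_natCast]
  exact_mod_cast hcount

theorem opNorm_sq_le_of_apply_eq_addChar_mul {m n R : Type*} [Fintype m] [Fintype n]
    [DecidableEq m] [DecidableEq n] [CommRing R] [Finite R] [DecidableEq R] (ψ : AddChar R ℂ)
    (f : m → R) (g : n → R) (A : Matrix m n ℂ) (hA : ∀ s t, A s t = ψ (f s * g t)) {B C : ℝ}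
    (hB : ∀ a, (#{t | g t = a} : ℝ) ≤ B) (hC : ∀ c ≠ 0, ‖∑ s, ψ (c * f s)‖ ≤ C) (hC0 : 0 ≤ C) :
    opNorm A ^ 2 ≤ B * card m + card n * C := by
  have hgram (t t' : n) : (Aᴴ * A) t t' = ∑ s, ψ ((g t' - g t) * f s) := by
    rw [mul_apply]
    refine sum_congr rfl fun s _ => ?_
    rw [conjTranspose_apply, hA, hA, star_def, ← AddChar.map_neg_eq_conj, ← AddChar.map_add_eq_mul]
    ring_nf
  have hentry (t t' : n) : ‖(Aᴴ * A) t t'‖ ≤ if g t' = g t then (card m : ℝ) else C := by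
    rw [hgram]
    split_ifs with h
    · simp [h]
    · exact hC _ (sub_ne_zero.2 h)
  have hB0 : 0 ≤ B := (Nat.cast_nonneg _).trans (hB 0)
  refine opNorm_sq_le_of_sum_norm_conjTranspose_mul_self_le A (by positivity) fun t => ?_
  calc ∑ t', ‖(Aᴴ * A) t t'‖ ≤ ∑ t', if g t' = g t then (card m : ℝ) else C :=
        sum_le_sum fun t' _ => hentry t t'
    _ = #{t' | g t' = g t} * card m + #{t' | ¬g t' = g t} * C := by
        rw [sum_ite, sum_const, sum_const, nsmul_eq_mul, nsmul_eq_mul]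
    _ ≤ B * card m + card n * C := by
        gcongr
        · exact hB _
        · exact_mod_cast card_filter_le _ _

theorem opNorm_sq_le_of_apply_eq_addChar_prod_mul_prod {α : Type*} [Fintype α] [DecidableEq α]
    (e : α ≃ F) {ψ : AddChar F ℂ} (hψ : ψ.IsPrimitive) {l r : ℕ} (hl : 1 ≤ l) (hr : 1 ≤ r)
    (A : Matrix (Fin l → α) (Fin r → α) ℂ)
    (hA : ∀ s t, A s t = ψ ((∏ i, e (s i)) * ∏ j, e (t j))) :
    opNorm A ^ 2 ≤ (l + r - 1 : ℕ) * card F ^ (l + r - 1) := by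
  obtain ⟨k, rfl⟩ : ∃ k, l = k + 1 := ⟨l - 1, by omega⟩
  obtain ⟨k', rfl⟩ : ∃ k', r = k' + 1 := ⟨r - 1, by omega⟩
  let E (j : ℕ) : (Fin j → α) ≃ (Fin j → F) := Equiv.piCongrRight fun _ => e
  have hB (a : F) : (#{t : Fin (k' + 1) → α | ∏ j, e (t j) = a} : ℝ) ≤ (k' + 1) * card F ^ k' := by
    rw [card_equiv (E _) (t := {x | ∏ i, x i = a}) fun t => by simp [E]]
    exact_mod_cast card_filter_prod_eq_le k' a
  have hC (c : F) (hc : c ≠ 0) :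
      ‖∑ s : Fin (k + 1) → α, ψ (c * ∏ i, e (s i))‖ ≤ k * card F ^ k := by
    rw [Fintype.sum_equiv (E _) (fun s => ψ (c * ∏ i, e (s i))) (fun x => ψ (c * ∏ i, x i))
      fun s => rfl]
    exact norm_sum_addChar_mul_prod_le hψ hc k
  refine (opNorm_sq_le_of_apply_eq_addChar_mul ψ _ _ A hA hB hC (by positivity)).trans_eq ?_
  simp only [card_fun, Fintype.card_fin, card_congr e,
    show k + 1 + (k' + 1) - 1 = k + k' + 1 by omega]
  push_cast
  ring

/-- The paper's index `a + 1 ∈ {1, …, p}`, read modulo `p`. -/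
noncomputable def shiftToZMod (p : ℕ) [NeZero p] : Fin p ≃ ZMod p :=
  Equiv.ofBijective (fun a => ((a : ℕ) : ZMod p) + 1) <|
    (Fintype.bijective_iff_injective_and_card _).2 ⟨fun a b h => by
      simpa [ZMod.natCast_eq_natCast_iff', Nat.mod_eq_of_lt, Fin.ext_iff] using h, by simp⟩

lemma Mmat_apply (p d l : ℕ) [NeZero p] (s : Fin l → Fin p) (t : Fin (d - l) → Fin p) :
    Mmat p d l s t =
      ZMod.stdAddChar ((∏ i, shiftToZMod p (s i)) * ∏ j, shiftToZMod p (t j)) := by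
  have : (∏ i, shiftToZMod p (s i)) * ∏ j, shiftToZMod p (t j)
      = (((∏ i, ((s i : ℕ) + 1)) * (∏ j, ((t j : ℕ) + 1)) : ℕ) : ℤ) := by
    simp [shiftToZMod]
  rw [this, ZMod.stdAddChar_coe, Mmat, of_apply, Int.cast_natCast]

theorem opNorm_Mmat_sq_le_general (p d l : ℕ) (hp : p.Prime)
    (hl : 1 ≤ l) (hl' : l ≤ d - 1) :
    opNorm (Mmat p d l) ^ 2 ≤ ((d : ℝ) - 1) * (p : ℝ) ^ (d - 1) := by
  have : Fact p.Prime := ⟨hp⟩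
  have h := opNorm_sq_le_of_apply_eq_addChar_prod_mul_prod (shiftToZMod p)
    (ZMod.isPrimitive_stdAddChar p) hl (by omega) (Mmat p d l) (Mmat_apply p d l)
  rwa [ZMod.card, show l + (d - l) - 1 = d - 1 by omega, Nat.cast_sub (by omega),
    Nat.cast_one] at h

/-- For `p` prime, `d ≥ 2` and `1 ≤ l ≤ d−1`, the operator norm of `M_l` satisfies
`‖M_l‖² ≤ (d−1) p^{d−1}`. -/
theorem opNorm_Mmat_sq_le (p d l : ℕ) (hp : p.Prime) (hd : 2 ≤ d)
    (hl : 1 ≤ l) (hl' : l ≤ d - 1) :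
    opNorm (Mmat p d l) ^ 2 ≤ ((d : ℝ) - 1) * (p : ℝ) ^ (d - 1) :=
  opNorm_Mmat_sq_le_general p d l hp hl hl'
end

section
/- Let d, m be positive integers. Partition [2dm] into 2m consecutive intervals J₁,...,J_{2m} each of size d. Let π be a non-crossing partition of [2dm] all of whose blocks have even cardinality, and suppose that no two consecutive elements i, i+1 lying in the same interval J_k are in the same block of π (i.e. i ∼_π i+1 only if d divides i). Then π connects only elements of different intervals: for every k and every i ≠ j both in J_k, i and j are not in the same block of π. -/
open Classical

/-!
Let `i < j` lie in a common block. As no block is a singleton, `i + 1` has a partner `y ≠ i + 1`.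
If `i + 1 < y < j`, recurse on the shorter pair `(i + 1, y)`; otherwise non-crossing (or
transitivity, when `y` is `i` or `j`) forces `i ∼ i + 1`. So a block meeting an interval twice
contains two consecutive elements of that interval, which `hcons` forbids.
-/

variable {N : ℕ} {P : Finpartition (Finset.univ : Finset (Fin N))}

lemma SameBlock.symm {i j : Fin N} (h : SameBlock P i j) : SameBlock P j i :=
  let ⟨b, hb, hi, hj⟩ := h
  ⟨b, hb, hj, hi⟩

lemma SameBlock.trans {i j k : Fin N} (h₁ : SameBlock P i j) (h₂ : SameBlock P j k) :
    SameBlock P i k :=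
  let ⟨b, hb, hi, hj⟩ := h₁
  let ⟨_, hc, hj', hk⟩ := h₂
  ⟨b, hb, hi, P.eq_of_mem_parts hc hb hj' hj ▸ hk⟩

lemma exists_sameBlock_ne (hP : ∀ b ∈ P.parts, b.card ≠ 1) (x : Fin N) :
    ∃ y, y ≠ x ∧ SameBlock P x y := by
  obtain ⟨b, hb, hxb⟩ := P.exists_mem (Finset.mem_univ x)
  have hcard : 1 < b.card := by
    have := (Finset.card_pos.mpr ⟨x, hxb⟩ : 0 < b.card)
    have := hP b hb
    omega
  obtain ⟨y, hyb, hyx⟩ := Finset.exists_mem_ne hcard x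
  exact ⟨y, hyx, b, hb, hxb, hyb⟩

lemma IsNonCrossing.exists_sameBlock_add_one [NeZero N] (hnc : IsNonCrossing P)
    (hP : ∀ b ∈ P.parts, b.card ≠ 1) {i j : Fin N} (hij : i < j) (h : SameBlock P i j) :
    ∃ a, i ≤ a ∧ a < j ∧ SameBlock P a (a + 1) := by
  have hx : ((i + 1 : Fin N) : ℕ) = i + 1 := Fin.val_add_one_of_lt' (by omega)
  by_cases hj : j = i + 1
  · exact ⟨i, le_rfl, hij, hj ▸ h⟩
  have hxj : i + 1 < j := by omega
  have hix : i < i + 1 := by omega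
  obtain ⟨y, hyx, hxy⟩ := exists_sameBlock_ne hP (i + 1)
  by_cases hy : i + 1 < y ∧ y < j
  · obtain ⟨a, hxa, hay, ha⟩ := hnc.exists_sameBlock_add_one hP hy.1 hxy
    exact ⟨a, hix.le.trans hxa, hay.trans hy.2, ha⟩
  refine ⟨i, le_rfl, hij, ?_⟩
  rcases lt_trichotomy y i with hyi | rfl | hiy
  · exact (hnc y i (i + 1) j hyi hix hxj hxy.symm h).symm.trans hxy.symm
  · exact hxy.symm
  rcases lt_trichotomy y j with hyj | rfl | hjy
  · exact absurd ⟨by omega, hyj⟩ hy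
  · exact h.trans hxy.symm
  · exact hnc i (i + 1) j y hix hxj hjy h hxy
termination_by (j : ℕ) - i
decreasing_by omega

/-- Elements are indexed from `0`: `i` lies in the interval `J_{i / d + 1}`, and `hcons` is the
1-based condition "`i ∼ i + 1` only if `d ∣ i`". -/
theorem nonCrossing_even_consecutive_intervals_general (d m : ℕ)
    [NeZero (2 * d * m)]
    (π : Finpartition (Finset.univ : Finset (Fin (2 * d * m))))
    (hnc : IsNonCrossing π)
    (heven : ∀ b ∈ π.parts, Even b.card)
    (hcons : ∀ i : Fin (2 * d * m), SameBlock π i (i + 1) → d ∣ ((i : ℕ) + 1)) :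
    ∀ i j : Fin (2 * d * m), i ≠ j → (i : ℕ) / d = (j : ℕ) / d → ¬ SameBlock π i j := by
  intro i j hij hdiv h
  wlog hlt : i < j generalizing i j
  · exact this j i hij.symm hdiv.symm h.symm (lt_of_le_of_ne (not_lt.mp hlt) hij.symm)
  have hP : ∀ b ∈ π.parts, b.card ≠ 1 := fun b hb h1 => Nat.not_even_one (h1 ▸ heven b hb)
  obtain ⟨a, hia, haj, ha⟩ := hnc.exists_sameBlock_add_one hP hlt h
  have hsucc : ((a : ℕ) + 1) / d = (a : ℕ) / d + 1 := Nat.succ_div_of_dvd (hcons a ha)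
  have hi : (i : ℕ) / d ≤ (a : ℕ) / d := Nat.div_le_div_right hia
  have hj : ((a : ℕ) + 1) / d ≤ (j : ℕ) / d := Nat.div_le_div_right haj
  omega

/-- Let `π` be a non-crossing partition of `[2dm]` (indexed here from `0`) with all
blocks of even cardinality.  The interval of the element `i` (0-based) is `J_k` with
`k − 1 = i / d`.  If `π` connects two cyclically consecutive elements only at the ends
of the intervals (`i ∼ i+1` only if `d` divides `i+1`, in 1-based terms `d ∣ i`),
then no block of `π` contains two distinct elements of a same interval `J_k`. -/
theorem nonCrossing_even_consecutive_intervals (d m : ℕ) (hd : 0 < d) (hm : 0 < m)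
    [NeZero (2 * d * m)]
    (π : Finpartition (Finset.univ : Finset (Fin (2 * d * m))))
    (hnc : IsNonCrossing π)
    (heven : ∀ b ∈ π.parts, Even b.card)
    (hcons : ∀ i : Fin (2 * d * m), SameBlock π i (i + 1) → d ∣ ((i : ℕ) + 1)) :
    ∀ i j : Fin (2 * d * m), i ≠ j → (i : ℕ) / d = (j : ℕ) / d → ¬ SameBlock π i j :=
  nonCrossing_even_consecutive_intervals_general d m π hnc heven hcons
end

section
/- Let m ≥ 1, let π ∈ NC*(1,m) (a non-crossing partition of [2m] with all blocks of even size), and let k ∈ [2m]. Then B(π) − 1, where B(π) is the number of blocks of the quotient partition Φ(π) of [m], equals the number of odd elements l ∈ [2m] \ {k} such that every element l′ of the block π(l) satisfies l ≤ l′ < k in the cyclic order starting at l. -/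
open Classical

/-- The 0-indexed element of `[2m]` corresponding to the 1-based element `2k−1`. -/
def dbl {m : ℕ} (k : Fin m) : Fin (2 * m) := ⟨2 * k.val, by have := k.isLt; omega⟩

/-- The 0-indexed element of `[2m]` corresponding to the 1-based element `2k`. -/
def dbl' {m : ℕ} (k : Fin m) : Fin (2 * m) := ⟨2 * k.val + 1, by have := k.isLt; omega⟩

/-- The relation on `[m]` generating `Φ(π)`: `k` and `l` are related if some element of
`{2k−1, 2k}` is `π`-equivalent to some element of `{2l−1, 2l}`. -/
def phiBase {m : ℕ} (π : Finpartition (Finset.univ : Finset (Fin (2 * m))))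
    (k l : Fin m) : Prop :=
  SameBlock π (dbl k) (dbl l) ∨ SameBlock π (dbl k) (dbl' l) ∨
    SameBlock π (dbl' k) (dbl l) ∨ SameBlock π (dbl' k) (dbl' l)

/-- `B(π)`: the number of blocks of the quotient partition `Φ(π)` of `[m]`. -/
noncomputable def numPhiBlocks {m : ℕ}
    (π : Finpartition (Finset.univ : Finset (Fin (2 * m)))) : ℕ :=
  Nat.card (Quotient (Relation.EqvGen.setoid (phiBase π)))

/-!
Positions are 0-indexed and read cyclically: `(x - o).val` is the position of `x` when `[2m]`
is read starting at `o`. Reading from `k`, the right-hand side counts the blocks of `π` not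
containing `k` whose first element is even.

If every pair `{2j, 2j + 1}` lies in one block, the blocks of `Φ(π)` are those of `π`, and
every block not containing `k` starts at an even element. Otherwise merge the distinct blocks
`V ∋ 2j` and `W ∋ 2j + 1`; this leaves `Φ(π)` unchanged and keeps the partition non-crossing
with even blocks. Reading from `2j + 1`, non-crossing puts all of `W` before the first element
`b` of `V`, and everything before `b` is a union of blocks, so `b` is odd. Hence, reading from
`k`, whichever of `V`, `W` starts later starts at `2j + 1` or at `b`, both odd, and the count
is unchanged too. Induct on the number of pairs split by `π`.
-/

open Finset

section CyclicOrder

variable {n : ℕ} [NeZero n]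

theorem Fin.sub_val_add_sub_val (o o' x : Fin n) :
    (x - o').val + (o' - o).val = (x - o).val ∨
      (x - o').val + (o' - o).val = (x - o).val + n := by
  rw [show x - o = (x - o') + (o' - o) by abel, Fin.val_add]
  have := (x - o').isLt
  have := (o' - o).isLt
  rcases lt_or_ge ((x - o').val + (o' - o).val) n with h | h
  · left; rw [Nat.mod_eq_of_lt h]
  · right; rw [Nat.mod_eq_sub_mod h, Nat.mod_eq_of_lt (by omega)]; omega

theorem Fin.sub_val_inj {o x y : Fin n} : (x - o).val = (y - o).val ↔ x = y := by
  rw [Fin.val_inj, sub_left_inj]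

theorem Fin.sub_val_pos {o x : Fin n} : 0 < (x - o).val ↔ x ≠ o := by
  rw [Nat.pos_iff_ne_zero, Ne, Fin.val_eq_zero_iff, sub_eq_zero]

theorem Fin.self_sub_val_lt {o x : Fin n} (h : x ≠ o) : (o - o).val < (x - o).val := by
  rw [sub_self, Fin.val_zero]
  exact Fin.sub_val_pos.2 h

theorem Fin.sub_add_one_val (a : Fin n) : (a - (a + 1)).val = n - 1 := by
  obtain ⟨n, rfl⟩ := Nat.exists_eq_add_one_of_ne_zero (NeZero.ne n)
  rw [sub_add_eq_sub_sub, sub_self, zero_sub, Fin.coe_neg_one]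
  rfl

theorem Fin.sub_val_lt_sub_add_one_val {a x : Fin n} (hx : x ≠ a) :
    (x - (a + 1)).val < (a - (a + 1)).val := by
  have := (x - (a + 1)).isLt
  have := (Fin.sub_val_inj (o := a + 1)).not.2 hx
  rw [Fin.sub_add_one_val] at this ⊢
  omega

theorem Fin.add_one_sub_val {a k : Fin n} (h : a + 1 ≠ k) :
    (a + 1 - k).val = (a - k).val + 1 := by
  have hpos := Fin.sub_val_pos.2 h
  have := (a + 1 - k).isLt
  have hn : 1 % n = 1 := Nat.one_mod_eq_one.2 (by rintro rfl; omega)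
  rcases Fin.sub_val_add_sub_val k a (a + 1) with h1 | h1 <;>
    simp only [add_sub_cancel_left, Fin.val_one', hn] at h1 <;> omega

theorem Fin.sub_val_lt_rotate₃ {o o' x y z : Fin n}
    (hxy : (x - o).val < (y - o).val) (hyz : (y - o).val < (z - o).val) :
    ((x - o').val < (y - o').val ∧ (y - o').val < (z - o').val) ∨
      ((y - o').val < (z - o').val ∧ (z - o').val < (x - o').val) ∨
      ((z - o').val < (x - o').val ∧ (x - o').val < (y - o').val) := by
  have := (o' - o).isLt
  rcases Fin.sub_val_add_sub_val o o' x with hx | hx <;>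
  rcases Fin.sub_val_add_sub_val o o' y with hy | hy <;>
  rcases Fin.sub_val_add_sub_val o o' z with hz | hz <;> omega

theorem Fin.sub_val_lt_rotate₄ {o o' i j k l : Fin n}
    (hij : (i - o).val < (j - o).val) (hjk : (j - o).val < (k - o).val)
    (hkl : (k - o).val < (l - o).val) :
    ((i - o').val < (j - o').val ∧ (j - o').val < (k - o').val ∧ (k - o').val < (l - o').val) ∨
    ((j - o').val < (k - o').val ∧ (k - o').val < (l - o').val ∧ (l - o').val < (i - o').val) ∨
    ((k - o').val < (l - o').val ∧ (l - o').val < (i - o').val ∧ (i - o').val < (j - o').val) ∨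
    ((l - o').val < (i - o').val ∧ (i - o').val < (j - o').val ∧ (j - o').val < (k - o').val) := by
  have := (o' - o).isLt
  rcases Fin.sub_val_add_sub_val o o' i with hi | hi <;>
  rcases Fin.sub_val_add_sub_val o o' j with hj | hj <;>
  rcases Fin.sub_val_add_sub_val o o' k with hk | hk <;>
  rcases Fin.sub_val_add_sub_val o o' l with hl | hl <;> omega

theorem Fin.card_filter_sub_val_lt (o : Fin n) {t : ℕ} (ht : t ≤ n) :
    #{x : Fin n | (x - o).val < t} = t := by
  rw [card_equiv (Equiv.subRight o) (t := {x : Fin n | x.val < t}) (by simp),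
    Fin.card_filter_val_lt, min_eq_right ht]

end CyclicOrder

namespace Setoid

variable {α β : Type*}

def merge (s : Setoid α) (a b : α) : Setoid α where
  r x y := s x y ∨ (s a x ∨ s b x) ∧ (s a y ∨ s b y)
  iseqv.refl x := Or.inl (s.refl' x)
  iseqv.symm := by
    rintro x y (h | ⟨hx, hy⟩)
    exacts [Or.inl (s.symm' h), Or.inr ⟨hy, hx⟩]
  iseqv.trans := by
    rintro x y z (hxy | ⟨hx, hy⟩) (hyz | ⟨hy', hz⟩)
    · exact Or.inl (s.trans' hxy hyz)
    · exact Or.inr ⟨hy'.imp (s.trans' · (s.symm' hxy)) (s.trans' · (s.symm' hxy)), hz⟩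
    · exact Or.inr ⟨hx, hy.imp (s.trans' · hyz) (s.trans' · hyz)⟩
    · exact Or.inr ⟨hx, hz⟩

section

variable {s : Setoid α} {a b x y : α}

theorem le_merge : s ≤ s.merge a b := fun _ _ => Or.inl

theorem merge_left_right : s.merge a b a b := Or.inr ⟨Or.inl (s.refl' a), Or.inr (s.refl' b)⟩

theorem merge_iff_of_rel (hx : s a x ∨ s b x) : s.merge a b x y ↔ s a y ∨ s b y := by
  refine ⟨?_, fun hy => Or.inr ⟨hx, hy⟩⟩
  rintro (h | ⟨-, hy⟩)
  exacts [hx.imp (s.trans' · h) (s.trans' · h), hy]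

theorem merge_iff_of_not_rel (hx : ¬(s a x ∨ s b x)) : s.merge a b x y ↔ s x y :=
  ⟨fun h => h.resolve_right (hx ·.1), Or.inl⟩

theorem map_merge {f : α → β} (h : f a = f b) : (s.merge a b).map f = s.map f := by
  have to_a : ∀ {z}, s a z ∨ s b z → s.map f (f z) (f a) := by
    rintro z (hz | hz)
    · exact Relation.EqvGen.rel _ _ ⟨z, a, s.symm' hz, rfl, rfl⟩
    · exact Relation.EqvGen.rel _ _ ⟨z, b, s.symm' hz, rfl, h.symm⟩
  refine le_antisymm (eqvGen_le ?_) (eqvGen_mono ?_)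
  · rintro _ _ ⟨x, y, hxy | ⟨hx, hy⟩, rfl, rfl⟩
    · exact Relation.EqvGen.rel _ _ ⟨x, y, hxy, rfl, rfl⟩
    · exact (s.map f).trans' (to_a hx) ((s.map f).symm' (to_a hy))
  · rintro _ _ ⟨x, y, hxy, rfl, rfl⟩
    exact ⟨x, y, Or.inl hxy, rfl, rfl⟩

theorem natCard_quotient_eq_card {A : Finset α} (hA : ∀ x, ∃! a, a ∈ A ∧ s a x) :
    Nat.card (Quotient s) = #A := by
  rw [← Nat.card_eq_finsetCard]
  refine (Nat.card_eq_of_bijective (fun a : A => Quotient.mk s a) ⟨?_, ?_⟩).symm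
  · rintro ⟨a, ha⟩ ⟨b, hb⟩ hab
    exact Subtype.ext ((hA b).unique ⟨ha, Quotient.exact hab⟩ ⟨hb, s.refl' b⟩)
  · rintro ⟨x⟩
    obtain ⟨a, ⟨ha, hax⟩, -⟩ := hA x
    exact ⟨⟨a, ha⟩, Quotient.sound hax⟩

theorem natCard_quotient_map {f : α → β} (hf : Function.Surjective f) (h : ker f ≤ s) :
    Nat.card (Quotient (s.map f)) = Nat.card (Quotient s) := by
  rw [mapOfSurjective_eq_map h hf]
  refine (Nat.card_eq_of_bijective (Quotient.map (sb := s.mapOfSurjective f h hf) f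
    fun x y hxy => ⟨x, y, hxy, rfl, rfl⟩) ⟨?_, ?_⟩).symm
  · rintro ⟨x⟩ ⟨y⟩ hxy
    obtain ⟨x', y', hxy', hx, hy⟩ := Quotient.exact hxy
    exact Quotient.sound (s.trans' (s.symm' (h hx)) (s.trans' hxy' (h hy)))
  · rintro ⟨z⟩
    obtain ⟨x, rfl⟩ := hf z
    exact ⟨⟦x⟧, rfl⟩

end

section Fintype

variable [Fintype α] {s : Setoid α}

theorem even_card_of_forall_rel_mem (heven : ∀ x, Even #{y | s x y}) {S : Finset α}
    (hS : ∀ x ∈ S, ∀ y, s x y → y ∈ S) : Even #S := by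
  rw [card_eq_sum_card_image (Quotient.mk s) S]
  refine Finset.even_sum _ fun q hq => ?_
  obtain ⟨x, hx, rfl⟩ := mem_image.1 hq
  have hfiber : {y ∈ S | ⟦y⟧ = Quotient.mk s x} = ({y | s x y} : Finset α) := by
    ext y
    simp only [mem_filter, mem_univ, true_and, Quotient.eq]
    exact ⟨fun h => s.symm' h.2, fun h => ⟨hS x hx y h, s.symm' h⟩⟩
  rw [hfiber]
  exact heven x

theorem even_card_merge (heven : ∀ x, Even #{y | s x y}) {a b : α} (hab : ¬s a b) (x : α) :
    Even #{y | s.merge a b x y} := by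
  by_cases hx : s a x ∨ s b x
  · simp_rw [merge_iff_of_rel hx, filter_or]
    rw [card_union_of_disjoint
      (disjoint_filter.2 fun y _ hay hby => hab (s.trans' hay (s.symm' hby)))]
    exact (heven a).add (heven b)
  · simp_rw [merge_iff_of_not_rel hx]
    exact heven x

end Fintype

section Cyclic

variable {n : ℕ} (s : Setoid (Fin n))

def IsFirstFrom (o l : Fin n) : Prop :=
  ∀ l', s l l' → (l - o).val ≤ (l' - o).val

def IsNonCrossingFrom (o : Fin n) : Prop :=
  ∀ i j k l : Fin n, (i - o).val < (j - o).val → (j - o).val < (k - o).val →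
    (k - o).val < (l - o).val → s i k → s j l → s i j

variable {s}

theorem IsFirstFrom.of_le {t : Setoid (Fin n)} (hst : s ≤ t) {o l : Fin n}
    (h : t.IsFirstFrom o l) : s.IsFirstFrom o l :=
  fun l' hl' => h l' (hst hl')

theorem exists_isFirstFrom (o x : Fin n) : ∃ l, s x l ∧ s.IsFirstFrom o l := by
  obtain ⟨l, hl, hmin⟩ := exists_min_image {y | s x y} (fun y => (y - o).val)
    ⟨x, by simp⟩
  simp only [mem_filter, mem_univ, true_and] at hl hmin
  exact ⟨l, hl, fun l' hl' => hmin l' (s.trans' hl hl')⟩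

variable [NeZero n]

theorem isFirstFrom_self (o : Fin n) : s.IsFirstFrom o o := by
  intro l' _
  simp

theorem IsFirstFrom.eq {o l l' : Fin n} (hl : s.IsFirstFrom o l) (hl' : s.IsFirstFrom o l')
    (h : s l l') : l = l' :=
  Fin.sub_val_inj.1 (le_antisymm (hl l' h) (hl' l (s.symm' h)))

theorem natCard_quotient_eq_card_isFirstFrom (o : Fin n) :
    Nat.card (Quotient s) = #{l | s.IsFirstFrom o l} := by
  refine natCard_quotient_eq_card fun x => ?_
  obtain ⟨l, hxl, hl⟩ := exists_isFirstFrom (s := s) o x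
  refine ⟨l, ⟨by simpa using hl, s.symm' hxl⟩, fun l' ⟨hl', hl'x⟩ => ?_⟩
  simp only [mem_filter, mem_univ, true_and] at hl'
  exact hl'.eq hl (s.trans' hl'x hxl)

theorem forall_sub_val_lt_iff (k l : Fin n) :
    (∀ l', s l l' → (l' - l).val < (k - l).val) ↔ l ≠ k ∧ s.IsFirstFrom k l := by
  have hkk : (k - k).val = 0 := by simp
  have hk := Fin.sub_val_add_sub_val k l k
  constructor
  · intro h
    have hlk : l ≠ k := by
      rintro rfl
      simpa using h l (s.refl' l)
    refine ⟨hlk, fun l' hl' => ?_⟩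
    have := h l' hl'
    have := Fin.sub_val_pos.2 hlk
    rcases Fin.sub_val_add_sub_val k l l' with h' | h' <;> omega
  · rintro ⟨hlk, h⟩ l' hl'
    have := h l' hl'
    have := Fin.sub_val_pos.2 hlk
    have := (l' - l).isLt
    rcases Fin.sub_val_add_sub_val k l l' with h' | h' <;> omega

theorem IsNonCrossingFrom.rotate {o : Fin n} (h : s.IsNonCrossingFrom o) (o' : Fin n) :
    s.IsNonCrossingFrom o' := by
  intro i j k l hij hjk hkl hik hjl
  rcases Fin.sub_val_lt_rotate₄ (o' := o) hij hjk hkl with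
    ⟨h₁, h₂, h₃⟩ | ⟨h₁, h₂, h₃⟩ | ⟨h₁, h₂, h₃⟩ | ⟨h₁, h₂, h₃⟩
  · exact h i j k l h₁ h₂ h₃ hik hjl
  · exact s.trans' hik (s.symm' (h j k l i h₁ h₂ h₃ hjl (s.symm' hik)))
  · exact s.trans' hik (s.trans' (h k l i j h₁ h₂ h₃ (s.symm' hik) (s.symm' hjl)) (s.symm' hjl))
  · exact s.trans' (s.symm' (h l i j k h₁ h₂ h₃ (s.symm' hjl) hik)) (s.symm' hjl)

end Cyclic

section Gap

variable {n : ℕ} [NeZero n] {s : Setoid (Fin n)} {a b : Fin n}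

theorem IsFirstFrom.sub_val_lt_of_rel (hnc : s.IsNonCrossingFrom (a + 1)) (hab : s a b)
    (hb : s.IsFirstFrom (a + 1) b) {x z : Fin n} (hx : (x - (a + 1)).val < (b - (a + 1)).val)
    (hxz : s x z) : (z - (a + 1)).val < (b - (a + 1)).val := by
  have hxa : ¬s a x := fun h => (hb x (s.trans' (s.symm' hab) h)).not_gt hx
  by_contra! hz
  have hzb : z ≠ b := by rintro rfl; exact hxa (s.trans' hab (s.symm' hxz))
  have hza : z ≠ a := by rintro rfl; exact hxa (s.symm' hxz)
  have hbz := lt_of_le_of_ne hz (Fin.sub_val_inj.not.2 hzb.symm)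
  have hxb := hnc x b z a hx hbz (Fin.sub_val_lt_sub_add_one_val hza) hxz (s.symm' hab)
  exact hxa (s.trans' hab (s.symm' hxb))

theorem IsFirstFrom.even_sub_val (hnc : s.IsNonCrossingFrom (a + 1))
    (heven : ∀ x, Even #{y | s x y}) (hab : s a b) (hb : s.IsFirstFrom (a + 1) b) :
    Even (b - (a + 1)).val := by
  have := even_card_of_forall_rel_mem heven
    (S := {x | (x - (a + 1)).val < (b - (a + 1)).val}) (by
      simp only [mem_filter, mem_univ, true_and]
      exact fun x hx z hxz => hb.sub_val_lt_of_rel hnc hab hx hxz)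
  rwa [Fin.card_filter_sub_val_lt _ (b - (a + 1)).isLt.le] at this

theorem sub_val_lt_sub_val_of_rel (hnc : s.IsNonCrossingFrom (a + 1)) (hne : ¬s a (a + 1))
    {x y : Fin n} (hy : s (a + 1) y) (hx : s a x) :
    (y - (a + 1)).val < (x - (a + 1)).val := by
  obtain ⟨b, hab, hb⟩ := exists_isFirstFrom (s := s) (a + 1) a
  have hb0 := Fin.self_sub_val_lt (o := a + 1) (x := b) (by rintro rfl; exact hne hab)
  exact (hb.sub_val_lt_of_rel hnc hab hb0 hy).trans_le
    (hb x (s.trans' (s.symm' hab) hx))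

theorem isNonCrossingFrom_merge (hnc : ∀ o, s.IsNonCrossingFrom o) (hne : ¬s a (a + 1))
    (o : Fin n) : (s.merge a (a + 1)).IsNonCrossingFrom o := by
  refine IsNonCrossingFrom.rotate (o := a + 1) ?_ o
  have hsplit : ∀ {x y}, (s a x ∨ s (a + 1) x) → (s a y ∨ s (a + 1) y) → ¬s x y →
      (x - (a + 1)).val < (y - (a + 1)).val → s (a + 1) x ∧ s a y := by
    rintro x y (hx | hx) (hy | hy) hxy hlt
    · exact absurd (s.trans' (s.symm' hx) hy) hxy
    · exact absurd hlt (sub_val_lt_sub_val_of_rel (hnc _) hne hy hx).not_gt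
    · exact ⟨hx, hy⟩
    · exact absurd (s.trans' (s.symm' hx) hy) hxy
  intro i j k l hij hjk hkl hik hjl
  by_cases hs : s i k ∧ s j l
  · exact Or.inl (hnc _ i j k l hij hjk hkl hs.1 hs.2)
  by_cases hi : s a i ∨ s (a + 1) i
  · by_cases hj : s a j ∨ s (a + 1) j
    · exact Or.inr ⟨hi, hj⟩
    exfalso
    have hjl' : s j l := (merge_iff_of_not_rel hj).1 hjl
    have hk := (hsplit hi ((merge_iff_of_rel hi).1 hik) (fun h => hs ⟨h, hjl'⟩)
      (hij.trans hjk)).2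
    have hla : l ≠ a := by rintro rfl; exact hj (Or.inl (s.symm' hjl'))
    have hjk' := hnc _ j k l a hjk hkl (Fin.sub_val_lt_sub_add_one_val hla) hjl' (s.symm' hk)
    exact hj (Or.inl (s.trans' hk (s.symm' hjk')))
  · exfalso
    have hik' : s i k := (merge_iff_of_not_rel hi).1 hik
    have hj : s a j ∨ s (a + 1) j := by
      by_contra hj
      exact hs ⟨hik', (merge_iff_of_not_rel hj).1 hjl⟩
    have hj' := (hsplit hj ((merge_iff_of_rel hj).1 hjl) (fun h => hs ⟨hik', h⟩)
      (hjk.trans hkl)).1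
    have hi0 := Fin.self_sub_val_lt (o := a + 1) (x := i)
      (by rintro rfl; exact hi (Or.inr (s.refl' _)))
    exact hi (Or.inr (hnc _ (a + 1) i j k hi0 hij hjk hj' hik'))

theorem IsFirstFrom.eq_add_one_of_lt (hnc : s.IsNonCrossingFrom (a + 1)) (hne : ¬s a (a + 1))
    {k u v : Fin n} (hu : s a u) (hv : s (a + 1) v) (hvk : s.IsFirstFrom k v)
    (h : (u - k).val < (v - k).val) : v = a + 1 := by
  by_contra hva
  have hvu := sub_val_lt_sub_val_of_rel hnc hne hv hu
  have hv0 := Fin.self_sub_val_lt hva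
  have hva' := lt_of_le_of_ne (hvk (a + 1) (s.symm' hv)) (Fin.sub_val_inj.not.2 hva)
  rcases Fin.sub_val_lt_rotate₃ (o' := k) hv0 hvu with h' | h' | h' <;> omega

theorem IsFirstFrom.eq_of_lt (hnc : s.IsNonCrossingFrom (a + 1)) (hne : ¬s a (a + 1))
    (hab : s a b) (hb : s.IsFirstFrom (a + 1) b) {k u v : Fin n} (hu : s a u)
    (huk : s.IsFirstFrom k u) (hv : s (a + 1) v) (h : (v - k).val < (u - k).val) : u = b := by
  by_contra hub
  have hvb := sub_val_lt_sub_val_of_rel hnc hne hv hab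
  have hbu := lt_of_le_of_ne (hb u (s.trans' (s.symm' hab) hu))
    (Fin.sub_val_inj.not.2 (Ne.symm hub))
  have hub' := lt_of_le_of_ne (huk b (s.trans' (s.symm' hu) hab)) (Fin.sub_val_inj.not.2 hub)
  rcases Fin.sub_val_lt_rotate₃ (o' := k) hvb hbu with h' | h' | h' <;> omega

end Gap

end Setoid

section Pairs

variable {m : ℕ}

def half (x : Fin (2 * m)) : Fin m := ⟨x.val / 2, by have := x.isLt; omega⟩

theorem half_eq_iff {x : Fin (2 * m)} {j : Fin m} : half x = j ↔ x = dbl j ∨ x = dbl' j := by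
  simp only [Fin.ext_iff, half, dbl, dbl']
  omega

theorem half_dbl (j : Fin m) : half (dbl j) = j := half_eq_iff.2 (Or.inl rfl)

theorem half_dbl' (j : Fin m) : half (dbl' j) = j := half_eq_iff.2 (Or.inr rfl)

theorem half_surjective : Function.Surjective (half (m := m)) := fun j => ⟨dbl j, half_dbl j⟩

theorem dbl_add_one [NeZero m] (j : Fin m) : dbl j + 1 = dbl' j :=
  Fin.ext (Fin.val_add_one_of_lt' (by simp only [dbl]; omega))

theorem ker_half_le {s : Setoid (Fin (2 * m))} (h : ∀ j, s (dbl j) (dbl' j)) :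
    Setoid.ker half ≤ s := by
  intro x y hxy
  obtain ⟨j, hj⟩ : ∃ j, half y = j := ⟨_, rfl⟩
  rcases half_eq_iff.1 (hxy.trans hj) with rfl | rfl <;>
    rcases half_eq_iff.1 hj with rfl | rfl
  exacts [s.refl' _, h j, s.symm' (h j), s.refl' _]

variable [NeZero m] {s : Setoid (Fin (2 * m))}

theorem card_isFirstFrom_of_forall_rel_dbl (h : ∀ j, s (dbl j) (dbl' j)) (k : Fin (2 * m)) :
    #{l | s.IsFirstFrom k l} = #{l | l ≠ k ∧ l.val % 2 = 0 ∧ s.IsFirstFrom k l} + 1 := by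
  rw [← card_insert_of_notMem (s := {l | l ≠ k ∧ l.val % 2 = 0 ∧ s.IsFirstFrom k l}) (a := k)
    (by simp)]
  congr 1
  ext l
  simp only [mem_insert, mem_filter, mem_univ, true_and]
  refine ⟨fun hl => or_iff_not_imp_left.2 fun hlk => ⟨hlk, ?_, hl⟩, ?_⟩
  · by_contra hodd
    obtain ⟨j, rfl⟩ : ∃ j, l = dbl' j :=
      ⟨half l, (half_eq_iff.1 rfl).resolve_left fun h => hodd (by rw [h]; simp [dbl])⟩
    have := hl (dbl j) (s.symm' (h j))
    rw [← dbl_add_one, Fin.add_one_sub_val (by rwa [dbl_add_one])] at this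
    omega
  · rintro (rfl | ⟨-, -, hl⟩)
    exacts [Setoid.isFirstFrom_self l, hl]

theorem odd_val_of_even_sub_val {j : Fin m} {b : Fin (2 * m)} (hb : Even (b - dbl' j).val) :
    b.val % 2 = 1 := by
  have := Fin.sub_val_add_sub_val 0 (dbl' j) b
  simp only [sub_zero] at this
  rw [Nat.even_iff] at hb
  have : (dbl' j).val = 2 * j.val + 1 := rfl
  omega

theorem isFirstFrom_merge_iff (hnc : ∀ o, s.IsNonCrossingFrom o) (heven : ∀ x, Even #{y | s x y})
    {j : Fin m} (hne : ¬s (dbl j) (dbl j + 1)) {k l : Fin (2 * m)} (hl : l.val % 2 = 0) :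
    (s.merge (dbl j) (dbl j + 1)).IsFirstFrom k l ↔ s.IsFirstFrom k l := by
  refine ⟨Setoid.IsFirstFrom.of_le Setoid.le_merge, fun hlk => ?_⟩
  by_cases hU : s (dbl j) l ∨ s (dbl j + 1) l
  swap
  · exact fun l' hl' => hlk l' ((Setoid.merge_iff_of_not_rel hU).1 hl')
  suffices ∀ l', s (dbl j) l' ∨ s (dbl j + 1) l' → (l - k).val ≤ (l' - k).val from
    fun l' hl' => this l' ((Setoid.merge_iff_of_rel hU).1 hl')
  rcases hU with hal | hal
  · obtain ⟨b, hab, hb⟩ := Setoid.exists_isFirstFrom (s := s) (dbl j + 1) (dbl j)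
    obtain ⟨v, hav, hv⟩ := Setoid.exists_isFirstFrom (s := s) k (dbl j + 1)
    have hlv : (l - k).val ≤ (v - k).val := by
      by_contra! h
      have hbodd := odd_val_of_even_sub_val (j := j)
        (dbl_add_one j ▸ hb.even_sub_val (hnc _) heven hab)
      rw [hb.eq_of_lt (hnc _) hne hab hal hlk hav h] at hl
      omega
    rintro l' (h | h)
    · exact hlk l' (s.trans' (s.symm' hal) h)
    · exact hlv.trans (hv l' (s.trans' (s.symm' hav) h))
  · obtain ⟨u, hau, hu⟩ := Setoid.exists_isFirstFrom (s := s) k (dbl j)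
    have hlu : (l - k).val ≤ (u - k).val := by
      by_contra! h
      rw [hlk.eq_add_one_of_lt (hnc _) hne hau hal h, dbl_add_one] at hl
      simp only [dbl'] at hl
      omega
    rintro l' (h | h)
    · exact hlu.trans (hu l' (s.trans' (s.symm' hau) h))
    · exact hlk l' (s.trans' (s.symm' hal) h)

theorem natCard_quotient_map_half (hnc : ∀ o, s.IsNonCrossingFrom o)
    (heven : ∀ x, Even #{y | s x y}) (k : Fin (2 * m)) :
    Nat.card (Quotient (s.map half)) = #{l | l ≠ k ∧ l.val % 2 = 0 ∧ s.IsFirstFrom k l} + 1 := by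
  induction hN : #{j : Fin m | ¬s (dbl j) (dbl' j)} using Nat.strong_induction_on
    generalizing s with
  | _ N ih =>
  by_cases hpair : ∀ j, s (dbl j) (dbl' j)
  · rw [Setoid.natCard_quotient_map half_surjective (ker_half_le hpair),
      Setoid.natCard_quotient_eq_card_isFirstFrom k, card_isFirstFrom_of_forall_rel_dbl hpair]
  push Not at hpair
  obtain ⟨j, hj⟩ := hpair
  have hne : ¬s (dbl j) (dbl j + 1) := by rwa [dbl_add_one]
  have hfewer : #{i : Fin m | ¬s.merge (dbl j) (dbl j + 1) (dbl i) (dbl' i)} < N := by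
    rw [← hN]
    refine card_lt_card (Finset.ssubset_iff_of_subset ?_ |>.2 ⟨j, ?_, ?_⟩)
    · intro i
      simp only [mem_filter, mem_univ, true_and]
      exact fun hi h => hi (Setoid.le_merge h)
    · simpa using hj
    · simpa [← dbl_add_one] using Setoid.merge_left_right
  have hhalf : half (dbl j) = half (dbl j + 1) := by rw [dbl_add_one, half_dbl, half_dbl']
  rw [← Setoid.map_merge hhalf,
    ih _ hfewer (Setoid.isNonCrossingFrom_merge hnc hne) (Setoid.even_card_merge heven hne) rfl]
  congr 2
  exact filter_congr fun l _ => and_congr_right fun _ =>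
    and_congr_right fun hl => isFirstFrom_merge_iff hnc heven hne hl

end Pairs

section Blocks

variable {N : ℕ} (P : Finpartition (univ : Finset (Fin N)))

def blockSetoid : Setoid (Fin N) where
  r := SameBlock P
  iseqv.refl x := ⟨P.part x, P.part_mem.2 (mem_univ x), P.mem_part (mem_univ x),
    P.mem_part (mem_univ x)⟩
  iseqv.symm := fun ⟨t, ht, hxt, hyt⟩ => ⟨t, ht, hyt, hxt⟩
  iseqv.trans := fun ⟨t, ht, hxt, hyt⟩ ⟨_, hu, hyu, hzu⟩ =>
    ⟨t, ht, hxt, P.eq_of_mem_parts hu ht hyu hyt ▸ hzu⟩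

theorem filter_blockSetoid_eq_part (x : Fin N) :
    ({y | blockSetoid P x y} : Finset (Fin N)) = P.part x := by
  ext y
  rw [P.mem_part_iff_exists, mem_filter]
  simp only [mem_univ, true_and]
  exact exists_congr fun t => and_congr_right fun _ => and_comm

theorem isNonCrossingFrom_zero [NeZero N] (hnc : IsNonCrossing P) :
    (blockSetoid P).IsNonCrossingFrom 0 := by
  intro i j k l hij hjk hkl
  simp only [sub_zero] at hij hjk hkl
  exact hnc i j k l hij hjk hkl

theorem phiBase_eq_map {m : ℕ} (π : Finpartition (univ : Finset (Fin (2 * m)))) :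
    phiBase π = Relation.Map (blockSetoid π) half half := by
  ext x y
  constructor
  · rintro (h | h | h | h)
    exacts [⟨_, _, h, half_dbl x, half_dbl y⟩, ⟨_, _, h, half_dbl x, half_dbl' y⟩,
      ⟨_, _, h, half_dbl' x, half_dbl y⟩, ⟨_, _, h, half_dbl' x, half_dbl' y⟩]
  · rintro ⟨z, w, h, hz, hw⟩
    rcases half_eq_iff.1 hz with rfl | rfl <;> rcases half_eq_iff.1 hw with rfl | rfl
    exacts [Or.inl h, Or.inr (Or.inl h), Or.inr (Or.inr (Or.inl h)), Or.inr (Or.inr (Or.inr h))]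

theorem numPhiBlocks_eq_natCard_quotient {m : ℕ}
    (π : Finpartition (univ : Finset (Fin (2 * m)))) :
    numPhiBlocks π = Nat.card (Quotient ((blockSetoid π).map half)) := by
  rw [numPhiBlocks, phiBase_eq_map]
  rfl

end Blocks

theorem numPhiBlocks_eq_general (m : ℕ)
    (π : Finpartition (Finset.univ : Finset (Fin (2 * m))))
    (hnc : IsNonCrossing π) (heven : ∀ b ∈ π.parts, Even b.card)
    (k : Fin (2 * m)) :
    numPhiBlocks π =
      (Finset.univ.filter (fun l : Fin (2 * m) => l ≠ k ∧ l.val % 2 = 0 ∧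
        ∀ l', SameBlock π l l' → (l' - l).val < (k - l).val)).card + 1 := by
  have : NeZero m := NeZero.of_pos (by have := k.isLt; omega)
  have hclasses (x : Fin (2 * m)) : Even #{y | blockSetoid π x y} := by
    rw [filter_blockSetoid_eq_part]
    exact heven _ (π.part_mem.2 (mem_univ x))
  rw [numPhiBlocks_eq_natCard_quotient,
    natCard_quotient_map_half ((isNonCrossingFrom_zero π hnc).rotate) hclasses k]
  congr 2
  refine filter_congr fun l _ => and_congr_right fun hlk => and_congr_right fun _ => ?_
  exact ((Setoid.forall_sub_val_lt_iff k l).trans (and_iff_right hlk)).symm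

/-- For `π ∈ NC*(1,m)` (non-crossing, even blocks) and `k ∈ [2m]`: `B(π) − 1` equals
the number of (1-based) odd elements `l ≠ k` such that every `l′` in the block of `l`
satisfies `l ≤ l′ < k` in the cyclic order starting at `l` (0-indexed: `l.val` even and
`(l′ − l).val < (k − l).val` for all `l′ ∼_π l`). -/
theorem numPhiBlocks_eq (m : ℕ) (hm : 0 < m)
    (π : Finpartition (Finset.univ : Finset (Fin (2 * m))))
    (hnc : IsNonCrossing π) (heven : ∀ b ∈ π.parts, Even b.card)
    (k : Fin (2 * m)) :
    numPhiBlocks π =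
      (Finset.univ.filter (fun l : Fin (2 * m) => l ≠ k ∧ l.val % 2 = 0 ∧
        ∀ l', SameBlock π l l' → (l' - l).val < (k - l).val)).card + 1 :=
  numPhiBlocks_eq_general m π hnc heven k
end
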